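/- For φ ∈ [0, π/2], define λ(φ) = (1 + cos²φ + 2 cos φ sin φ)/8 and λ'(φ) = (−sin 2φ + 2 cos 2φ)/8, and set ṡ(φ) = 2λ(φ)·cos φ − λ'(φ)·sin φ and ν̇(φ) = 2λ(φ)·sin φ + λ'(φ)·cos φ. Then for every φ ∈ [0, π/2] one has ṡ(φ)/2 ≤ ν̇(φ) ≤ ṡ(φ), and the identity 4·(ṡ(φ)² − 2·ṡ(φ)·ν̇(φ) + 2·ν̇(φ)²) = (1 + cos²φ + 2 cos φ sin φ)/4 holds. -/

import Mathlib

open Real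

/- On `[0, π/2]` the Hamiltonian gradient simplifies to `ṡ = (2 cos φ + sin φ)/4` and
`ν̇ = (sin φ + cos φ)/4`, so `ν̇ - ṡ/2 = sin φ / 8` and `ṡ - ν̇ = cos φ / 4` are nonnegative,
and the squared metric of `(ṡ, ν̇)` reduces to `2λ` by `sin² + cos² = 1`. -/

noncomputable section

namespace EulerMumford

def hamiltonianProfile (φ : ℝ) : ℝ := (1 + cos φ ^ 2 + 2 * cos φ * sin φ) / 8

def hamiltonianProfileDeriv (φ : ℝ) : ℝ := (-sin (2 * φ) + 2 * cos (2 * φ)) / 8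

def sDot (φ : ℝ) : ℝ := 2 * hamiltonianProfile φ * cos φ - hamiltonianProfileDeriv φ * sin φ

def nuDot (φ : ℝ) : ℝ := 2 * hamiltonianProfile φ * sin φ + hamiltonianProfileDeriv φ * cos φ

/-- The squared metric `𝕱²(ṡ, ν̇)` on the branch `ṡ/2 ≤ ν̇ ≤ ṡ`. -/
def metricSq (s ν : ℝ) : ℝ := 4 * (s ^ 2 - 2 * s * ν + 2 * ν ^ 2)

theorem sDot_eq (φ : ℝ) : sDot φ = (2 * cos φ + sin φ) / 4 := by
  rw [sDot, hamiltonianProfile, hamiltonianProfileDeriv, sin_two_mul, cos_two_mul]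
  linear_combination (cos φ / 4) * sin_sq_add_cos_sq φ

theorem nuDot_eq (φ : ℝ) : nuDot φ = (sin φ + cos φ) / 4 := by
  rw [nuDot, hamiltonianProfile, hamiltonianProfileDeriv, sin_two_mul, cos_two_mul]
  linear_combination (cos φ / 2) * sin_sq_add_cos_sq φ

theorem half_sDot_le_nuDot {φ : ℝ} (hsin : 0 ≤ sin φ) : sDot φ / 2 ≤ nuDot φ := by
  rw [sDot_eq, nuDot_eq]
  linarith

theorem nuDot_le_sDot {φ : ℝ} (hcos : 0 ≤ cos φ) : nuDot φ ≤ sDot φ := by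
  rw [sDot_eq, nuDot_eq]
  linarith

theorem metricSq_sDot_nuDot (φ : ℝ) :
    metricSq (sDot φ) (nuDot φ) = 2 * hamiltonianProfile φ := by
  rw [metricSq, sDot_eq, nuDot_eq, hamiltonianProfile]
  linear_combination sin_sq_add_cos_sq φ / 4

end EulerMumford

end

open EulerMumford

/-- On `φ ∈ [0, π/2]`, with `λ(φ) = (1 + cos²φ + 2cos φ sin φ)/8`,
`λ'(φ) = (−sin 2φ + 2cos 2φ)/8`, `ṡ = 2λcos φ − λ'sin φ`,
`ν̇ = 2λsin φ + λ'cos φ`, one has `ṡ/2 ≤ ν̇ ≤ ṡ` and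
`4(ṡ² − 2ṡν̇ + 2ν̇²) = (1 + cos²φ + 2cos φ sin φ)/4`. -/
theorem stmt_10 (φ : ℝ) (hφ : φ ∈ Set.Icc (0:ℝ) (π/2)) :
    (2 * ((1 + (Real.cos φ)^2 + 2 * Real.cos φ * Real.sin φ) / 8) * Real.cos φ
        - ((-Real.sin (2*φ) + 2 * Real.cos (2*φ)) / 8) * Real.sin φ) / 2
      ≤ 2 * ((1 + (Real.cos φ)^2 + 2 * Real.cos φ * Real.sin φ) / 8) * Real.sin φ
        + ((-Real.sin (2*φ) + 2 * Real.cos (2*φ)) / 8) * Real.cos φ ∧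
    2 * ((1 + (Real.cos φ)^2 + 2 * Real.cos φ * Real.sin φ) / 8) * Real.sin φ
        + ((-Real.sin (2*φ) + 2 * Real.cos (2*φ)) / 8) * Real.cos φ
      ≤ 2 * ((1 + (Real.cos φ)^2 + 2 * Real.cos φ * Real.sin φ) / 8) * Real.cos φ
        - ((-Real.sin (2*φ) + 2 * Real.cos (2*φ)) / 8) * Real.sin φ ∧
    4 * ((2 * ((1 + (Real.cos φ)^2 + 2 * Real.cos φ * Real.sin φ) / 8) * Real.cos φ
          - ((-Real.sin (2*φ) + 2 * Real.cos (2*φ)) / 8) * Real.sin φ)^2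
        - 2 * (2 * ((1 + (Real.cos φ)^2 + 2 * Real.cos φ * Real.sin φ) / 8) * Real.cos φ
            - ((-Real.sin (2*φ) + 2 * Real.cos (2*φ)) / 8) * Real.sin φ)
          * (2 * ((1 + (Real.cos φ)^2 + 2 * Real.cos φ * Real.sin φ) / 8) * Real.sin φ
            + ((-Real.sin (2*φ) + 2 * Real.cos (2*φ)) / 8) * Real.cos φ)
        + 2 * (2 * ((1 + (Real.cos φ)^2 + 2 * Real.cos φ * Real.sin φ) / 8) * Real.sin φ
            + ((-Real.sin (2*φ) + 2 * Real.cos (2*φ)) / 8) * Real.cos φ)^2)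
      = (1 + (Real.cos φ)^2 + 2 * Real.cos φ * Real.sin φ) / 4 := by
  change sDot φ / 2 ≤ nuDot φ ∧ nuDot φ ≤ sDot φ ∧
    metricSq (sDot φ) (nuDot φ) = (1 + cos φ ^ 2 + 2 * cos φ * sin φ) / 4
  obtain ⟨hφ0, hφπ⟩ := hφ
  have hsin : 0 ≤ sin φ := sin_nonneg_of_nonneg_of_le_pi hφ0 (by linarith [pi_pos])
  have hcos : 0 ≤ cos φ := cos_nonneg_of_mem_Icc ⟨by linarith [pi_pos], hφπ⟩
  refine ⟨half_sDot_le_nuDot hsin, nuDot_le_sDot hcos, ?_⟩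
  rw [metricSq_sDot_nuDot, hamiltonianProfile]
  ring
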